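/- arXiv:2110.04814 — 4 statements merged into one kernel-verified Lean document; each statement's English description precedes it below -/
import Mathlib

section
/- Let g ∈ ℝ^d, H ∈ ℝ^{d×d} symmetric, and M' > 0. If s* is a global minimizer of m(s) = gᵀs + ½ sᵀHs + (M'/6)‖s‖³, then: (i) g + Hs* + (M'/2)‖s*‖s* = 0, (ii) H + (M'/2)‖s*‖·I is positive semidefinite, and (iii) m(s*) ≤ −(M'/12)‖s*‖³. -/
open RealInnerProductSpace

/-- The cubic-regularized quadratic model `m(s) = gᵀs + ½ sᵀHs + (M'/6)‖s‖³`. -/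
noncomputable def cubicModel {d : ℕ} (g : EuclideanSpace ℝ (Fin d))
    (H : Matrix (Fin d) (Fin d) ℝ) (M' : ℝ) (s : EuclideanSpace ℝ (Fin d)) : ℝ :=
  ⟪g, s⟫ + 1 / 2 * ⟪s, Matrix.toEuclideanLin H s⟫ + M' / 6 * ‖s‖ ^ 3

/-!
Differentiating the model along lines through the minimizer `x` gives stationarity,
`g + T x + (M/2)‖x‖ x = 0`. On the sphere `‖x + w‖ = ‖x‖` the cubic term does not change and
stationarity turns `m (x + w) - m x` into `½ (⟪w, T w⟫ + (M/2)‖x‖‖w‖²)`, which is therefore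
nonnegative. Every direction `v` with `⟪x, v⟫ ≠ 0` has a multiple on that sphere; the directions
orthogonal to `x ≠ 0` are limits of such, and for `x = 0` the bound comes from `m (t v) ≥ 0` as
`t → 0⁺`. Pairing stationarity with `x` and using the curvature bound at `v = x` bounds `m x`.
-/

open Filter Topology

theorem nonneg_of_forall_pos_nonneg_quadratic {a b c : ℝ}
    (h : ∀ ε > 0, 0 ≤ a + b * ε + c * ε ^ 2) : 0 ≤ a := by
  have hlim : Tendsto (fun ε : ℝ => a + b * ε + c * ε ^ 2) (𝓝[>] 0) (𝓝 a) := by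
    have : Continuous (fun ε : ℝ => a + b * ε + c * ε ^ 2) := by fun_prop
    simpa using (this.tendsto 0).mono_left nhdsWithin_le_nhds
  exact ge_of_tendsto hlim (eventually_nhdsWithin_of_forall h)

section CubicRegModel

variable {E : Type*} [NormedAddCommGroup E] [InnerProductSpace ℝ E]

theorem hasDerivAt_norm_add_smul_pow_three (x v : E) :
    HasDerivAt (fun t : ℝ => ‖x + t • v‖ ^ 3) (3 * ‖x‖ * ⟪x, v⟫) 0 := by
  have hnorm : HasFDerivAt (fun s : E => ‖s‖ ^ 3) ((3 * ‖x‖) • innerSL ℝ x) x := by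
    have h := hasFDerivAt_norm_rpow x (p := 3) (by norm_num)
    norm_num at h
    exact h
  have hline : HasDerivAt (fun t : ℝ => x + t • v) v 0 := by
    simpa using ((hasDerivAt_id (0 : ℝ)).smul_const v).const_add x
  have := hnorm.comp_hasDerivAt_of_eq 0 hline (by simp)
  simpa [Function.comp_def, mul_assoc] using this

noncomputable def cubicRegModel (g : E) (T : E →ₗ[ℝ] E) (M : ℝ) (s : E) : ℝ :=
  ⟪g, s⟫ + 1 / 2 * ⟪s, T s⟫ + M / 6 * ‖s‖ ^ 3

variable {g : E} {T : E →ₗ[ℝ] E} {M : ℝ}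

theorem cubicRegModel_add (hT : T.IsSymmetric) (x w : E) :
    cubicRegModel g T M (x + w) = cubicRegModel g T M x + ⟪g + T x, w⟫ + 1 / 2 * ⟪w, T w⟫
      + M / 6 * (‖x + w‖ ^ 3 - ‖x‖ ^ 3) := by
  simp only [cubicRegModel, map_add, inner_add_left, inner_add_right, ← hT x w,
    real_inner_comm (T x) w]
  ring

theorem hasDerivAt_cubicRegModel_add_smul (hT : T.IsSymmetric) (x v : E) :
    HasDerivAt (fun t : ℝ => cubicRegModel g T M (x + t • v))
      ⟪g + T x + (M / 2 * ‖x‖) • x, v⟫ 0 := by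
  have hexp : (fun t : ℝ => cubicRegModel g T M (x + t • v)) = fun t =>
      cubicRegModel g T M x + ⟪g + T x, v⟫ * t + 1 / 2 * ⟪v, T v⟫ * t ^ 2
        + M / 6 * (‖x + t • v‖ ^ 3 - ‖x‖ ^ 3) := by
    ext t
    rw [cubicRegModel_add hT, map_smul, real_inner_smul_right, real_inner_smul_left,
      real_inner_smul_right]
    ring
  have hderiv := ((((hasDerivAt_id (0 : ℝ)).const_mul ⟪g + T x, v⟫).const_add
    (cubicRegModel g T M x)).add (((hasDerivAt_pow 2 (0 : ℝ)).const_mul (1 / 2 * ⟪v, T v⟫)))).add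
    (((hasDerivAt_norm_add_smul_pow_three x v).sub_const (‖x‖ ^ 3)).const_mul (M / 6))
  rw [hexp]
  refine hderiv.congr_deriv ?_
  simp only [inner_add_left, real_inner_smul_left]
  ring

theorem cubicRegModel_gradient_eq_zero (hT : T.IsSymmetric) {x : E}
    (hmin : ∀ s, cubicRegModel g T M x ≤ cubicRegModel g T M s) :
    g + T x + (M / 2 * ‖x‖) • x = 0 := by
  set r := g + T x + (M / 2 * ‖x‖) • x
  have hloc : IsLocalMin (fun t : ℝ => cubicRegModel g T M (x + t • r)) 0 :=
    Eventually.of_forall fun t => by simpa using hmin (x + t • r)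
  exact inner_self_eq_zero.mp (hloc.hasDerivAt_eq_zero (hasDerivAt_cubicRegModel_add_smul hT x r))

theorem cubicRegModel_curvature_nonneg_of_norm_add_eq (hT : T.IsSymmetric) {x : E}
    (hmin : ∀ s, cubicRegModel g T M x ≤ cubicRegModel g T M s) {w : E} (hw : ‖x + w‖ = ‖x‖) :
    0 ≤ ⟪w, T w⟫ + M / 2 * ‖x‖ * ‖w‖ ^ 2 := by
  have hgw : ⟪g + T x, w⟫ = -(M / 2 * ‖x‖) * ⟪x, w⟫ := by
    rw [eq_neg_of_add_eq_zero_left (cubicRegModel_gradient_eq_zero hT hmin), inner_neg_left,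
      real_inner_smul_left, neg_mul]
  have hxw : M / 2 * ‖x‖ * (2 * ⟪x, w⟫) = M / 2 * ‖x‖ * -‖w‖ ^ 2 := by
    congr 1
    have := norm_add_sq_real x w
    rw [hw] at this
    linarith
  have h := hmin (x + w)
  rw [cubicRegModel_add hT, hw, sub_self, hgw] at h
  linarith

theorem cubicRegModel_curvature_nonneg_of_inner_ne_zero (hT : T.IsSymmetric) {x : E}
    (hmin : ∀ s, cubicRegModel g T M x ≤ cubicRegModel g T M s) {v : E} (hxv : ⟪x, v⟫ ≠ 0) :
    0 ≤ ⟪v, T v⟫ + M / 2 * ‖x‖ * ‖v‖ ^ 2 := by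
  have hv : ‖v‖ ^ 2 ≠ 0 := pow_ne_zero 2 (norm_ne_zero_iff.mpr (by rintro rfl; simp at hxv))
  set α := -2 * ⟪x, v⟫ / ‖v‖ ^ 2
  have hα : α ≠ 0 := div_ne_zero (by simpa using hxv) hv
  have hw : ‖x + α • v‖ = ‖x‖ := by
    refine (sq_eq_sq₀ (norm_nonneg _) (norm_nonneg _)).mp ?_
    rw [norm_add_sq_real, real_inner_smul_right, norm_smul, mul_pow, Real.norm_eq_abs, sq_abs]
    linear_combination α * (div_mul_cancel₀ (-2 * ⟪x, v⟫) hv)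
  have h := cubicRegModel_curvature_nonneg_of_norm_add_eq hT hmin hw
  rw [map_smul, real_inner_smul_left, real_inner_smul_right, norm_smul, mul_pow,
    Real.norm_eq_abs, sq_abs] at h
  refine nonneg_of_mul_nonneg_right (a := α ^ 2) ?_ (by positivity)
  linarith

theorem cubicRegModel_curvature_nonneg (hT : T.IsSymmetric) {x : E}
    (hmin : ∀ s, cubicRegModel g T M x ≤ cubicRegModel g T M s) (v : E) :
    0 ≤ ⟪v, T v⟫ + M / 2 * ‖x‖ * ‖v‖ ^ 2 := by
  obtain hxv | hxv := ne_or_eq ⟪x, v⟫ 0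
  · exact cubicRegModel_curvature_nonneg_of_inner_ne_zero hT hmin hxv
  rcases eq_or_ne x 0 with rfl | hx
  · have hg : g = 0 := by simpa using cubicRegModel_gradient_eq_zero hT hmin
    simp only [norm_zero, mul_zero, zero_mul, add_zero]
    refine nonneg_of_forall_pos_nonneg_quadratic (b := M / 3 * ‖v‖ ^ 3) (c := 0) fun t ht => ?_
    have h := hmin (t • v)
    simp only [cubicRegModel, hg, inner_zero_left, map_smul, real_inner_smul_left,
      real_inner_smul_right, norm_smul, Real.norm_eq_abs, abs_of_pos ht, map_zero,
      inner_zero_right, norm_zero] at h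
    refine nonneg_of_mul_nonneg_right (a := t ^ 2 / 2) ?_ (by positivity)
    linarith
  · refine nonneg_of_forall_pos_nonneg_quadratic (b := 2 * ⟪v, T x⟫)
      (c := ⟪x, T x⟫ + M / 2 * ‖x‖ * ‖x‖ ^ 2) fun ε hε => ?_
    have hxε : ⟪x, v + ε • x⟫ ≠ 0 := by
      rw [inner_add_right, hxv, real_inner_smul_right, real_inner_self_eq_norm_sq]
      have := norm_pos_iff.mpr hx
      positivity
    have h := cubicRegModel_curvature_nonneg_of_inner_ne_zero hT hmin hxε
    have hnorm : ‖v + ε • x‖ ^ 2 = ‖v‖ ^ 2 + ε ^ 2 * ‖x‖ ^ 2 := by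
      rw [norm_add_sq_real, real_inner_smul_right, real_inner_comm, hxv, norm_smul, mul_pow,
        Real.norm_eq_abs, sq_abs]
      ring
    rw [hnorm, map_add, map_smul, inner_add_left, inner_add_right, inner_add_right] at h
    simp only [real_inner_smul_left, real_inner_smul_right, ← hT x v, real_inner_comm v (T x)] at h
    linarith

theorem cubicRegModel_value_le {x : E}
    (hgrad : g + T x + (M / 2 * ‖x‖) • x = 0) (hcurv : 0 ≤ ⟪x, T x⟫ + M / 2 * ‖x‖ * ‖x‖ ^ 2) :
    cubicRegModel g T M x ≤ -(M / 12) * ‖x‖ ^ 3 := by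
  have h : ⟪g + T x + (M / 2 * ‖x‖) • x, x⟫ = 0 := by rw [hgrad, inner_zero_left]
  rw [inner_add_left, inner_add_left, real_inner_smul_left, real_inner_self_eq_norm_sq,
    real_inner_comm x (T x)] at h
  unfold cubicRegModel
  linarith

end CubicRegModel

theorem cubic_model_optimality_general (d : ℕ) (g : EuclideanSpace ℝ (Fin d))
    (H : Matrix (Fin d) (Fin d) ℝ) (hH : H.IsSymm) (M' : ℝ)
    (sstar : EuclideanSpace ℝ (Fin d))
    (hmin : ∀ s, cubicModel g H M' sstar ≤ cubicModel g H M' s) :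
    g + Matrix.toEuclideanLin H sstar + (M' / 2 * ‖sstar‖) • sstar = 0 ∧
      (∀ v : EuclideanSpace ℝ (Fin d),
        0 ≤ ⟪v, Matrix.toEuclideanLin H v⟫ + M' / 2 * ‖sstar‖ * ‖v‖ ^ 2) ∧
      cubicModel g H M' sstar ≤ -(M' / 12) * ‖sstar‖ ^ 3 := by
  -- `cubicModel g H` unfolds to `cubicRegModel g (Matrix.toEuclideanLin H)`.
  have hT : (Matrix.toEuclideanLin H).IsSymmetric := Matrix.isSymmetric_toEuclideanLin_iff.mpr hH
  have hgrad := cubicRegModel_gradient_eq_zero hT hmin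
  have hcurv := cubicRegModel_curvature_nonneg hT hmin
  exact ⟨hgrad, hcurv, cubicRegModel_value_le hgrad (hcurv sstar)⟩

theorem cubic_model_optimality (d : ℕ) (g : EuclideanSpace ℝ (Fin d))
    (H : Matrix (Fin d) (Fin d) ℝ) (hH : H.IsSymm) (M' : ℝ) (hM' : 0 < M')
    (sstar : EuclideanSpace ℝ (Fin d))
    (hmin : ∀ s, cubicModel g H M' sstar ≤ cubicModel g H M' s) :
    g + Matrix.toEuclideanLin H sstar + (M' / 2 * ‖sstar‖) • sstar = 0 ∧
      (∀ v : EuclideanSpace ℝ (Fin d),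
        0 ≤ ⟪v, Matrix.toEuclideanLin H v⟫ + M' / 2 * ‖sstar‖ * ‖v‖ ^ 2) ∧
      cubicModel g H M' sstar ≤ -(M' / 12) * ‖sstar‖ ^ 3 :=
  cubic_model_optimality_general d g H hH M' sstar hmin
end

section
/- Let P be twice differentiable with M-Lipschitz Hessian. Under the same hypotheses (cubic step s_t with exact optimality for model built from g_t, H_t with ‖∇²P(x_t) − H_t‖ ≤ C_H√(Mε)), the next iterate satisfies ∇²P(x_{t+1}) ⪰ −(3M/2)‖s_t‖·I − C_H√(Mε)·I. -/
open RealInnerProductSpace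

theorem curvature_bound_next_iterate (d : ℕ) (M ε C_H : ℝ)
    (hM : 0 < M) (hε : 0 ≤ ε) (hCH : 0 ≤ C_H)
    (P : EuclideanSpace ℝ (Fin d) → ℝ) (hP : ContDiff ℝ 2 P)
    (hLip : ∀ x x', ‖fderiv ℝ (gradient P) x - fderiv ℝ (gradient P) x'‖ ≤ M * ‖x - x'‖)
    (xt : EuclideanSpace ℝ (Fin d)) (gt : EuclideanSpace ℝ (Fin d))
    (Ht : EuclideanSpace ℝ (Fin d) →L[ℝ] EuclideanSpace ℝ (Fin d))
    (hH : ‖fderiv ℝ (gradient P) xt - Ht‖ ≤ C_H * Real.sqrt (M * ε))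
    (st : EuclideanSpace ℝ (Fin d))
    (hstat : gt + Ht st + (M / 2 * ‖st‖) • st = 0)
    (hcurv : ∀ v : EuclideanSpace ℝ (Fin d), 0 ≤ ⟪v, Ht v⟫ + M / 2 * ‖st‖ * ‖v‖ ^ 2) :
    ∀ v : EuclideanSpace ℝ (Fin d),
      -(3 * M / 2 * ‖st‖ + C_H * Real.sqrt (M * ε)) * ‖v‖ ^ 2 ≤
        ⟪v, fderiv ℝ (gradient P) (xt + st) v⟫ := by
  intro v
  set A := fderiv ℝ (gradient P) (xt + st)
  set B := fderiv ℝ (gradient P) xt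
  have hAB : ‖A - B‖ ≤ M * ‖st‖ := by
    have h := hLip (xt + st) xt
    rwa [show xt + st - xt = st by abel] at h
  have hAHt : ‖A - Ht‖ ≤ M * ‖st‖ + C_H * Real.sqrt (M * ε) := by
    calc ‖A - Ht‖ = ‖(A - B) + (B - Ht)‖ := by abel_nf
    _ ≤ ‖A - B‖ + ‖B - Ht‖ := norm_add_le _ _
    _ ≤ M * ‖st‖ + C_H * Real.sqrt (M * ε) := add_le_add hAB hH
  have key : |⟪v, (A - Ht) v⟫| ≤ (M * ‖st‖ + C_H * Real.sqrt (M * ε)) * ‖v‖ ^ 2 := by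
    calc |⟪v, (A - Ht) v⟫| ≤ ‖v‖ * ‖(A - Ht) v‖ := abs_real_inner_le_norm _ _
    _ ≤ ‖v‖ * (‖A - Ht‖ * ‖v‖) := by
        gcongr; exact (A - Ht).le_opNorm v
    _ ≤ ‖v‖ * ((M * ‖st‖ + C_H * Real.sqrt (M * ε)) * ‖v‖) := by
        gcongr
    _ = (M * ‖st‖ + C_H * Real.sqrt (M * ε)) * ‖v‖ ^ 2 := by ring
  have hsplit : ⟪v, A v⟫ = ⟪v, Ht v⟫ + ⟪v, (A - Ht) v⟫ := by
    simp [inner_sub_right]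
  have h1 := hcurv v
  have h2 := neg_abs_le ⟪v, (A - Ht) v⟫
  nlinarith [key]
end

section
/- Let g ∈ ℝ^d with ‖g‖ ≥ L²/M and H symmetric with gᵀHg ≤ (1 + C_H)L‖g‖² for some C_H ≤ 1/40, where L, M > 0. Then the Cauchy radius R_C = −gᵀHg/(M‖g‖²) + sqrt((gᵀHg/(M‖g‖²))² + 2‖g‖/M) satisfies R_C ≥ 7L/(10M). -/
open RealInnerProductSpace

/-!
With `x = ⟪g, H g⟫ / (M * ‖g‖ ^ 2)` and `r = 7 * L / (10 * M)`, the bound follows from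
`2 * x * r + r ^ 2 ≤ 2 * ‖g‖ / M`. The left side increases with `x` and the right side with `‖g‖`,
so it suffices to check it at `x = 41 * L / (40 * M)` and `‖g‖ = L ^ 2 / M`, where it reads
`2 * (41 / 40) * (7 / 10) + (7 / 10) ^ 2 ≤ 2`.
-/

theorem le_neg_add_sqrt_sq_add {x r c : ℝ} (h : 2 * x * r + r ^ 2 ≤ c) :
    r ≤ -x + √(x ^ 2 + c) := by
  have : x + r ≤ √(x ^ 2 + c) :=
    (le_abs_self _).trans (Real.abs_le_sqrt (by linarith))
  linarith

theorem cauchy_radius_lower_bound_general (d : ℕ) (L M C_H : ℝ) (hL : 0 < L) (hM : 0 < M)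
    (hCH : C_H ≤ 1 / 40)
    (g : EuclideanSpace ℝ (Fin d))
    (H : EuclideanSpace ℝ (Fin d) →L[ℝ] EuclideanSpace ℝ (Fin d))
    (hg : L ^ 2 / M ≤ ‖g‖)
    (hcurv : ⟪g, H g⟫ ≤ (1 + C_H) * L * ‖g‖ ^ 2) :
    7 * L / (10 * M) ≤
      -(⟪g, H g⟫ / (M * ‖g‖ ^ 2)) +
        Real.sqrt ((⟪g, H g⟫ / (M * ‖g‖ ^ 2)) ^ 2 + 2 * ‖g‖ / M) := by
  have hg_pos : 0 < ‖g‖ := lt_of_lt_of_le (by positivity) hg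
  set x := ⟪g, H g⟫ / (M * ‖g‖ ^ 2)
  have hcurv' : ⟪g, H g⟫ ≤ 41 / 40 * L * ‖g‖ ^ 2 := hcurv.trans (by gcongr; linarith)
  have hx : x ≤ 41 * L / (40 * M) := by
    rw [div_le_div_iff₀ (by positivity) (by positivity)]
    nlinarith
  apply le_neg_add_sqrt_sq_add
  calc 2 * x * (7 * L / (10 * M)) + (7 * L / (10 * M)) ^ 2
      ≤ 2 * (41 * L / (40 * M)) * (7 * L / (10 * M)) + (7 * L / (10 * M)) ^ 2 := by gcongr
    _ ≤ 2 * (L ^ 2 / M) / M := by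
      field_simp
      nlinarith [mul_pos (mul_pos hL hL) (mul_pos hM hM)]
    _ ≤ 2 * ‖g‖ / M := by gcongr

theorem cauchy_radius_lower_bound (d : ℕ) (L M C_H : ℝ) (hL : 0 < L) (hM : 0 < M)
    (hCH : C_H ≤ 1 / 40)
    (g : EuclideanSpace ℝ (Fin d))
    (H : EuclideanSpace ℝ (Fin d) →L[ℝ] EuclideanSpace ℝ (Fin d))
    (hHsymm : ∀ u v, ⟪H u, v⟫ = ⟪u, H v⟫)
    (hg : L ^ 2 / M ≤ ‖g‖)
    (hcurv : ⟪g, H g⟫ ≤ (1 + C_H) * L * ‖g‖ ^ 2) :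
    7 * L / (10 * M) ≤
      -(⟪g, H g⟫ / (M * ‖g‖ ^ 2)) +
        Real.sqrt ((⟪g, H g⟫ / (M * ‖g‖ ^ 2)) ^ 2 + 2 * ‖g‖ / M) :=
  cauchy_radius_lower_bound_general d L M C_H hL hM hCH g H hg hcurv
end

section
/- Let T ≥ 1, κ ≥ 1, ε̃ > 0 and nonnegative reals s_0, …, s_{T−1}. Then Σ_{t=1}^{T} log((√(κ+1)(ε̃ + κ s_{t−1})/ε̃)) ≤ (T/3)·log(8(κ+1)^{1.5} + (8κ³(κ+1)^{1.5}/(T ε̃³))·Σ_{t=1}^{T} s_{t−1}³). -/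
/-!
Each logarithm is a third of the logarithm of its cube. By AM–GM (concavity of `log`), a sum of
`T` logarithms is at most `T` times the logarithm of any bound on the mean of their arguments,
and the mean of the cubes is bounded termwise by `(a + b)³ ≤ 8 (a³ + b³)`.
-/

open Finset Real

theorem Real.sum_log_le_card_mul_log_of_sum_le {ι : Type*} (s : Finset ι) {y : ι → ℝ} {M : ℝ}
    (hy : ∀ i ∈ s, 0 < y i) (hM : ∑ i ∈ s, y i ≤ #s * M) :
    ∑ i ∈ s, log (y i) ≤ #s * log M := by
  rcases s.eq_empty_or_nonempty with rfl | hs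
  · simp
  have hcard : (0 : ℝ) < #s := by exact_mod_cast hs.card_pos
  have hjensen : ∑ i ∈ s, (#s : ℝ)⁻¹ • log (y i) ≤ log (∑ i ∈ s, (#s : ℝ)⁻¹ • y i) :=
    strictConcaveOn_log_Ioi.concaveOn.le_map_sum (fun _ _ => by positivity)
      (by simp [hcard.ne']) hy
  rw [← smul_sum, ← smul_sum, smul_eq_mul, smul_eq_mul, inv_mul_le_iff₀ hcard] at hjensen
  have hmean : (#s : ℝ)⁻¹ * ∑ i ∈ s, y i ≤ M := by rwa [inv_mul_le_iff₀ hcard]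
  have hmean_pos : 0 < (#s : ℝ)⁻¹ * ∑ i ∈ s, y i := by
    have := sum_pos hy hs
    positivity
  exact hjensen.trans (mul_le_mul_of_nonneg_left (log_le_log hmean_pos hmean) hcard.le)

theorem Real.sum_log_le_card_div_mul_log_of_sum_pow_le {ι : Type*} (s : Finset ι) {y : ι → ℝ}
    {n : ℕ} {M : ℝ} (hn : n ≠ 0) (hy : ∀ i ∈ s, 0 < y i) (hM : ∑ i ∈ s, y i ^ n ≤ #s * M) :
    ∑ i ∈ s, log (y i) ≤ #s / n * log M := by
  have hlog := sum_log_le_card_mul_log_of_sum_le s (fun i hi => pow_pos (hy i hi) n) hM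
  simp only [Real.log_pow, ← mul_sum] at hlog
  rw [div_mul_eq_mul_div, le_div_iff₀ (by positivity)]
  linarith

theorem pow_three_mul_add_div_le {C ε u : ℝ} (hC : 0 ≤ C) (hε : 0 < ε) (hu : 0 ≤ u) :
    (C * (ε + u) / ε) ^ 3 ≤ 8 * C ^ 3 + 8 * C ^ 3 * u ^ 3 / ε ^ 3 := by
  have hcube : (ε + u) ^ 3 ≤ 2 ^ 2 * (ε ^ 3 + u ^ 3) := add_pow_le hε.le hu 3
  calc (C * (ε + u) / ε) ^ 3 = C ^ 3 * (ε + u) ^ 3 / ε ^ 3 := by ring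
    _ ≤ C ^ 3 * (8 * (ε ^ 3 + u ^ 3)) / ε ^ 3 := by gcongr; linarith [pow_nonneg hu 3, pow_pos hε 3]
    _ = 8 * C ^ 3 + 8 * C ^ 3 * u ^ 3 / ε ^ 3 := by field_simp

theorem Real.sqrt_pow_three {x : ℝ} (hx : 0 ≤ x) : √x ^ 3 = x ^ (1.5 : ℝ) := by
  rw [show (1.5 : ℝ) = (3 : ℕ) / 2 by norm_num, rpow_div_two_eq_sqrt _ hx, rpow_natCast]

theorem sum_log_bound_general (T : ℕ) (κ εt : ℝ) (hκ : 1 ≤ κ) (hεt : 0 < εt)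
    (s : ℕ → ℝ) (hs : ∀ t, 0 ≤ s t) :
    ∑ t ∈ Finset.Icc 1 T, Real.log (Real.sqrt (κ + 1) * (εt + κ * s (t - 1)) / εt) ≤
      (T : ℝ) / 3 *
        Real.log (8 * (κ + 1) ^ (1.5 : ℝ) +
          8 * κ ^ 3 * (κ + 1) ^ (1.5 : ℝ) / (T * εt ^ 3) *
            ∑ t ∈ Finset.Icc 1 T, s (t - 1) ^ 3) := by
  obtain rfl | hT := T.eq_zero_or_pos
  · simp
  have hcard : #(Icc 1 T) = T := by simp
  have hκs : ∀ t, 0 ≤ κ * s (t - 1) := fun t => mul_nonneg (by linarith) (hs _)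
  rw [← Real.sqrt_pow_three (by linarith)]
  refine (sum_log_le_card_div_mul_log_of_sum_pow_le _ three_ne_zero ?_ ?_).trans_eq
    (by rw [hcard, Nat.cast_ofNat])
  · intro t _
    have := hκs t
    positivity
  calc ∑ t ∈ Icc 1 T, (√(κ + 1) * (εt + κ * s (t - 1)) / εt) ^ 3
      ≤ ∑ t ∈ Icc 1 T, (8 * √(κ + 1) ^ 3 + 8 * √(κ + 1) ^ 3 * (κ * s (t - 1)) ^ 3 / εt ^ 3) :=
        sum_le_sum fun t _ => pow_three_mul_add_div_le (sqrt_nonneg _) hεt (hκs t)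
    _ = _ := by
      rw [sum_add_distrib, sum_const, nsmul_eq_mul, hcard, mul_add, mul_sum, mul_sum]
      congr 1
      refine sum_congr rfl fun t _ => ?_
      field_simp

theorem sum_log_bound (T : ℕ) (hT : 1 ≤ T) (κ εt : ℝ) (hκ : 1 ≤ κ) (hεt : 0 < εt)
    (s : ℕ → ℝ) (hs : ∀ t, 0 ≤ s t) :
    ∑ t ∈ Finset.Icc 1 T, Real.log (Real.sqrt (κ + 1) * (εt + κ * s (t - 1)) / εt) ≤
      (T : ℝ) / 3 *
        Real.log (8 * (κ + 1) ^ (1.5 : ℝ) +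
          8 * κ ^ 3 * (κ + 1) ^ (1.5 : ℝ) / (T * εt ^ 3) *
            ∑ t ∈ Finset.Icc 1 T, s (t - 1) ^ 3) :=
  sum_log_bound_general T κ εt hκ hεt s hs
end
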